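/- arXiv:1411.7601 — 4 statements merged into one kernel-verified Lean document; each statement's English description precedes it below -/
import Mathlib

section
/- Consider the log-linear model with parameters θ = (θ₁, θ₂, θ₃), θ₂ > 0, θ₃ > 0, on the design region [L,U] with 0 < L < U. Let x_l* = ((L+θ₃)(U+θ₃)/(U−L)) · log((U+θ₃)/(L+θ₃)) − θ₃. The design ξ* that puts weight (U−x_l*)(L+θ₃)/(2(U−L)(x_l*+θ₃)) at L, weight 1/2 at x_l*, and weight (x_l*−L)(U+θ₃)/(2(U−L)(x_l*+θ₃)) at U has all three weights strictly positive summing to 1, has invertible information matrix M_{ξ*}, and for every design ξ on [L,U] whose information matrix M_ξ is invertible, (M_{ξ*}^{−1})₂₂ ≤ (M_ξ^{−1})₂₂; that is, ξ* is e₂-optimal (c-optimal for the parameter θ₂). -/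
structure Design (I : Set ℝ) where
  pts : Finset ℝ
  w : ℝ → ℝ
  mem_pts : ∀ x ∈ pts, x ∈ I
  w_nonneg : ∀ x ∈ pts, 0 ≤ w x
  w_sum : ∑ x ∈ pts, w x = 1

noncomputable def infoMat {d : ℕ} (M : ℝ → Matrix (Fin d) (Fin d) ℝ) {I : Set ℝ}
    (ξ : Design I) : Matrix (Fin d) (Fin d) ℝ :=
  ∑ x ∈ ξ.pts, ξ.w x • M x

/-- Gradient vector of the log-linear model. -/
noncomputable def fLogLin (θ₂ θ₃ : ℝ) (x : ℝ) : Fin 3 → ℝ :=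
  ![1, Real.log (x + θ₃), θ₂ / (x + θ₃)]

/-- Single-observation information matrix of the log-linear model. -/
noncomputable def logLinInfo (θ₂ θ₃ : ℝ) (x : ℝ) : Matrix (Fin 3) (Fin 3) ℝ :=
  Matrix.vecMulVec (fLogLin θ₂ θ₃ x) (fLogLin θ₂ θ₃ x)

open Matrix Real

/-!
Elfving's argument. If a vector `z` satisfies `(f(x)ᵀz)² ≤ cᵀz` on the design region, then for
every design `ξ` with `y = M_ξ⁻¹ c`, expanding `Σ w (f(x)ᵀ(z - y))² ≥ 0` gives
`cᵀz ≤ cᵀ M_ξ⁻¹ c`. If moreover `M_{ξ*} z = c`, the left side is `cᵀ M_{ξ*}⁻¹ c`, so `ξ*` is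
`c`-optimal; here `c = e₂`.

After the shift `t = x + θ₃`, take `z` proportional to `(·, 1, m/θ₂)` with `m = x_l* + θ₃`:
then `f(x)ᵀz` is an affine function of `g(t) = log t + m/t`. This `g` is minimal at `t = m`, and
`x_l*` is exactly the point for which `g` takes equal values at `a = L + θ₃` and `b = U + θ₃`.
So on `[a, b]` the values `f(x)ᵀz` fill `[-2/D, 2/D]`, `D = g(a) - g(m)`, with the extremes at
the three support points, and the weights are those for which
`wL f(L) - ½ f(x_l*) + wU f(U)` is a multiple of `e₂`.
-/

section Design

variable {d : ℕ} {I : Set ℝ}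

theorem dotProduct_infoMat_mulVec (f : ℝ → Fin d → ℝ) (ξ : Design I) (v w : Fin d → ℝ) :
    v ⬝ᵥ (infoMat (fun x => vecMulVec (f x) (f x)) ξ *ᵥ w) =
      ∑ x ∈ ξ.pts, ξ.w x * ((f x ⬝ᵥ v) * (f x ⬝ᵥ w)) := by
  simp only [infoMat, sum_mulVec, smul_mulVec, vecMulVec_mulVec, op_smul_eq_smul,
    dotProduct_sum, dotProduct_smul, smul_eq_mul]
  exact Finset.sum_congr rfl fun x _ => by rw [dotProduct_comm v]; ring

theorem dotProduct_le_dotProduct_infoMat_inv_mulVec (f : ℝ → Fin d → ℝ) (ξ : Design I)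
    (hξ : IsUnit (infoMat (fun x => vecMulVec (f x) (f x)) ξ).det) {c z : Fin d → ℝ}
    (hz : ∀ x ∈ I, (f x ⬝ᵥ z) ^ 2 ≤ c ⬝ᵥ z) :
    c ⬝ᵥ z ≤ c ⬝ᵥ ((infoMat (fun x => vecMulVec (f x) (f x)) ξ)⁻¹ *ᵥ c) := by
  set M := infoMat (fun x => vecMulVec (f x) (f x)) ξ
  set y := M⁻¹ *ᵥ c
  have hMy : M *ᵥ y = c := by rw [mulVec_mulVec, mul_nonsing_inv _ hξ, one_mulVec]
  have hzz : ∑ x ∈ ξ.pts, ξ.w x * (f x ⬝ᵥ z) ^ 2 ≤ c ⬝ᵥ z :=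
    calc ∑ x ∈ ξ.pts, ξ.w x * (f x ⬝ᵥ z) ^ 2 ≤ ∑ x ∈ ξ.pts, ξ.w x * c ⬝ᵥ z :=
          Finset.sum_le_sum fun x hx =>
            mul_le_mul_of_nonneg_left (hz x (ξ.mem_pts x hx)) (ξ.w_nonneg x hx)
      _ = c ⬝ᵥ z := by rw [← Finset.sum_mul, ξ.w_sum, one_mul]
  have hzy : ∑ x ∈ ξ.pts, ξ.w x * ((f x ⬝ᵥ z) * (f x ⬝ᵥ y)) = c ⬝ᵥ z := by
    rw [← dotProduct_infoMat_mulVec, hMy, dotProduct_comm]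
  have hyy : ∑ x ∈ ξ.pts, ξ.w x * ((f x ⬝ᵥ y) * (f x ⬝ᵥ y)) = c ⬝ᵥ y := by
    rw [← dotProduct_infoMat_mulVec, hMy, dotProduct_comm]
  have hpos : 0 ≤ ∑ x ∈ ξ.pts, ξ.w x * (f x ⬝ᵥ z - f x ⬝ᵥ y) ^ 2 :=
    Finset.sum_nonneg fun x hx => mul_nonneg (ξ.w_nonneg x hx) (sq_nonneg _)
  have hexp : ∑ x ∈ ξ.pts, ξ.w x * (f x ⬝ᵥ z - f x ⬝ᵥ y) ^ 2 =
      ∑ x ∈ ξ.pts, ξ.w x * (f x ⬝ᵥ z) ^ 2 - 2 * (c ⬝ᵥ z) + c ⬝ᵥ y := by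
    rw [← hzy, ← hyy, Finset.mul_sum, ← Finset.sum_sub_distrib, ← Finset.sum_add_distrib]
    exact Finset.sum_congr rfl fun x _ => by ring
  linarith

end Design

theorem inv_apply_self_of_mulVec_eq_single {n : Type*} [Fintype n] [DecidableEq n]
    {M : Matrix n n ℝ} (hM : IsUnit M.det) {z : n → ℝ} {i : n} (hz : M *ᵥ z = Pi.single i 1) :
    M⁻¹ i i = z i := by
  have h : M⁻¹ *ᵥ Pi.single i 1 = z := by
    rw [← hz, mulVec_mulVec, nonsing_inv_mul _ hM, one_mulVec]
  simpa [mulVec_single] using congrFun h i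

theorem smul_vecMulVec_add_three_mulVec {n : ℕ} (p q r : ℝ) (u v w z : Fin n → ℝ) :
    (p • vecMulVec u u + q • vecMulVec v v + r • vecMulVec w w) *ᵥ z =
      (p * (u ⬝ᵥ z)) • u + (q * (v ⬝ᵥ z)) • v + (r * (w ⬝ᵥ z)) • w := by
  simp only [add_mulVec, smul_mulVec, vecMulVec_mulVec, op_smul_eq_smul, smul_smul]

theorem det_smul_vecMulVec_add_three (p q r : ℝ) (u v w : Fin 3 → ℝ) :
    (p • vecMulVec u u + q • vecMulVec v v + r • vecMulVec w w).det =
      p * q * r * (of ![u, v, w]).det ^ 2 := by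
  simp only [det_fin_three, Matrix.add_apply, Matrix.smul_apply, vecMulVec_apply, smul_eq_mul,
    of_apply, cons_val_zero, cons_val_one, cons_val_two, head_cons, tail_cons]
  ring

noncomputable def logAddDiv (m t : ℝ) : ℝ := log t + m / t

section LogAddDiv

variable {a b m t : ℝ}

theorem logAddDiv_self (hm : m ≠ 0) : logAddDiv m m = log m + 1 := by
  rw [logAddDiv, div_self hm]

theorem logAddDiv_self_le (hm : 0 < m) (ht : 0 < t) : logAddDiv m m ≤ logAddDiv m t := by
  have h := log_le_sub_one_of_pos (div_pos hm ht)
  rw [log_div hm.ne' ht.ne'] at h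
  rw [logAddDiv_self hm.ne', logAddDiv]
  linarith

theorem logAddDiv_self_lt (hm : 0 < m) (ht : 0 < t) (hne : t ≠ m) :
    logAddDiv m m < logAddDiv m t := by
  have h := log_lt_sub_one_of_pos (div_pos hm ht)
    (by rwa [ne_eq, div_eq_one_iff_eq ht.ne', eq_comm])
  rw [log_div hm.ne' ht.ne'] at h
  rw [logAddDiv_self hm.ne', logAddDiv]
  linarith

theorem logAddDiv_le_of_mul_nonpos (ha : 0 < a) (ht : 0 < t) (h : (t - a) * (t - m) ≤ 0) :
    logAddDiv m t ≤ logAddDiv m a := by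
  have hlog := log_le_sub_one_of_pos (div_pos ht ha)
  rw [log_div ht.ne' ha.ne'] at hlog
  have hfactor : t / a - 1 + m / t - m / a = (t - a) * (t - m) / (a * t) := by
    field_simp
    ring
  have hnp : (t - a) * (t - m) / (a * t) ≤ 0 := div_nonpos_of_nonpos_of_nonneg h (by positivity)
  rw [logAddDiv, logAddDiv]
  linarith

theorem logAddDiv_le_of_mem_Icc (ha : 0 < a) (hab : logAddDiv m a = logAddDiv m b)
    (ht : t ∈ Set.Icc a b) : logAddDiv m t ≤ logAddDiv m a := by
  obtain ⟨hat, htb⟩ := ht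
  rcases le_total t m with htm | hmt
  · exact logAddDiv_le_of_mul_nonpos ha (by linarith)
      (mul_nonpos_of_nonneg_of_nonpos (by linarith) (by linarith))
  · rw [hab]
    exact logAddDiv_le_of_mul_nonpos (by linarith) (by linarith)
      (mul_nonpos_of_nonpos_of_nonneg (by linarith) (by linarith))

end LogAddDiv

/-- `x_l* + θ₃`, in terms of the shifted endpoints `a = L + θ₃` and `b = U + θ₃`. -/
noncomputable def logLinMid (a b : ℝ) : ℝ := a * b / (b - a) * log (b / a)

section LogLinMid

variable {a b : ℝ}

theorem lt_logLinMid (ha : 0 < a) (hab : a < b) : a < logLinMid a b := by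
  have hb : 0 < b := ha.trans hab
  have h := log_lt_sub_one_of_pos (div_pos ha hb) (div_ne_one_of_ne hab.ne)
  rw [log_div ha.ne' hb.ne', ← neg_sub, ← log_div hb.ne' ha.ne'] at h
  have hlog : (b - a) / b < log (b / a) := by
    rw [sub_div, div_self hb.ne']
    linarith
  have hba : b - a ≠ 0 := (sub_pos.2 hab).ne'
  calc a = a * b / (b - a) * ((b - a) / b) := by field_simp
    _ < logLinMid a b := by
      rw [logLinMid]
      exact mul_lt_mul_of_pos_left hlog (div_pos (mul_pos ha hb) (sub_pos.2 hab))

theorem logLinMid_lt (ha : 0 < a) (hab : a < b) : logLinMid a b < b := by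
  have hb : 0 < b := ha.trans hab
  have h := log_lt_sub_one_of_pos (div_pos hb ha) (div_ne_one_of_ne hab.ne')
  have hba : b - a ≠ 0 := (sub_pos.2 hab).ne'
  calc logLinMid a b < a * b / (b - a) * (b / a - 1) :=
        mul_lt_mul_of_pos_left h (div_pos (mul_pos ha hb) (sub_pos.2 hab))
    _ = b := by field_simp

theorem logAddDiv_logLinMid_left_eq_right (ha : 0 < a) (hab : a < b) :
    logAddDiv (logLinMid a b) a = logAddDiv (logLinMid a b) b := by
  have hb : 0 < b := ha.trans hab
  have hba : b - a ≠ 0 := (sub_pos.2 hab).ne'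
  rw [logAddDiv, logAddDiv, logLinMid, log_div hb.ne' ha.ne']
  field_simp
  ring

end LogLinMid

theorem fLogLin_eq_fLogLin_zero (θ₂ θ₃ x : ℝ) : fLogLin θ₂ θ₃ x = fLogLin θ₂ 0 (x + θ₃) := by
  simp [fLogLin]

theorem logLinInfo_eq_logLinInfo_zero (θ₂ θ₃ x : ℝ) :
    logLinInfo θ₂ θ₃ x = logLinInfo θ₂ 0 (x + θ₃) := by
  rw [logLinInfo, logLinInfo, fLogLin_eq_fLogLin_zero]

noncomputable def logLinGap (a m : ℝ) : ℝ := logAddDiv m a - logAddDiv m m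

/-- Scaled so that `fLogLin θ₂ 0 t ⬝ᵥ z` is `2 / D` at `a`, `b` and `-2 / D` at `m`, where
`D = logLinGap a m`. -/
noncomputable def logLinElfvingVec (θ₂ a m : ℝ) : Fin 3 → ℝ :=
  (2 / logLinGap a m) ^ 2 • ![-(logAddDiv m a + logAddDiv m m) / 2, 1, m / θ₂]

section LogLinear

variable {θ₂ a b m wa wb : ℝ}

theorem logLinGap_pos (ha : 0 < a) (hm : 0 < m) (ham : a ≠ m) : 0 < logLinGap a m :=
  sub_pos.2 (logAddDiv_self_lt hm ha ham)

theorem fLogLin_zero_dotProduct (hθ₂ : θ₂ ≠ 0) (p m t : ℝ) :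
    fLogLin θ₂ 0 t ⬝ᵥ ![p, 1, m / θ₂] = p + logAddDiv m t := by
  simp only [fLogLin, add_zero, logAddDiv, dotProduct, Fin.sum_univ_three, cons_val_zero,
    cons_val_one, cons_val_two, head_cons, tail_cons]
  field_simp
  ring

theorem fLogLin_zero_dotProduct_logLinElfvingVec (hθ₂ : θ₂ ≠ 0) (t : ℝ) :
    fLogLin θ₂ 0 t ⬝ᵥ logLinElfvingVec θ₂ a m =
      (2 / logLinGap a m) ^ 2 * (logAddDiv m t - (logAddDiv m a + logAddDiv m m) / 2) := by
  rw [logLinElfvingVec, dotProduct_smul, fLogLin_zero_dotProduct hθ₂, smul_eq_mul]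
  ring

theorem logLinElfvingVec_one (θ₂ a m : ℝ) :
    logLinElfvingVec θ₂ a m 1 = (2 / logLinGap a m) ^ 2 := by
  simp [logLinElfvingVec]

theorem sq_fLogLin_zero_dotProduct_logLinElfvingVec_le (hθ₂ : θ₂ ≠ 0) (ha : 0 < a)
    (ham : a < m) (hab : logAddDiv m a = logAddDiv m b) {t : ℝ} (ht : t ∈ Set.Icc a b) :
    (fLogLin θ₂ 0 t ⬝ᵥ logLinElfvingVec θ₂ a m) ^ 2 ≤ logLinElfvingVec θ₂ a m 1 := by
  have hm : 0 < m := ha.trans ham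
  have hD := logLinGap_pos ha hm ham.ne
  have hlo := logAddDiv_self_le hm (ha.trans_le ht.1)
  have hhi := logAddDiv_le_of_mem_Icc ha hab ht
  have hdev : (logAddDiv m t - (logAddDiv m a + logAddDiv m m) / 2) ^ 2 ≤
      (logLinGap a m / 2) ^ 2 := by
    rw [logLinGap]
    exact sq_le_sq' (by linarith) (by linarith)
  rw [fLogLin_zero_dotProduct_logLinElfvingVec hθ₂, logLinElfvingVec_one]
  calc ((2 / logLinGap a m) ^ 2 * (logAddDiv m t - (logAddDiv m a + logAddDiv m m) / 2)) ^ 2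
      ≤ ((2 / logLinGap a m) ^ 2) ^ 2 * (logLinGap a m / 2) ^ 2 := by
        rw [mul_pow]
        gcongr
    _ = (2 / logLinGap a m) ^ 2 := by field_simp

theorem fLogLin_zero_threePoint_combination (ha : 0 < a) (ham : a < m) (hmb : m < b)
    (hab : logAddDiv m a = logAddDiv m b)
    (hwa : wa = (b - m) * a / (2 * (b - a) * m)) (hwb : wb = (m - a) * b / (2 * (b - a) * m)) :
    wa • fLogLin θ₂ 0 a - (1 / 2 : ℝ) • fLogLin θ₂ 0 m + wb • fLogLin θ₂ 0 b =
      (logLinGap a m / 2) • Pi.single 1 1 := by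
  have hm : 0 < m := ha.trans ham
  have hb : 0 < b := hm.trans hmb
  have hba : b - a ≠ 0 := by linarith
  have hlogb : log b = log a + m / a - m / b := by
    rw [logAddDiv, logAddDiv] at hab
    linarith
  subst hwa hwb
  ext i
  fin_cases i <;>
    simp [fLogLin, logLinGap, logAddDiv, hlogb] <;>
    field_simp <;>
    ring

theorem det_fLogLin_zero (ha : 0 < a) (hm : 0 < m) (hb : 0 < b)
    (hab : logAddDiv m a = logAddDiv m b) :
    (of ![fLogLin θ₂ 0 a, fLogLin θ₂ 0 m, fLogLin θ₂ 0 b]).det =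
      θ₂ * (b - a) * logLinGap a m / (a * b) := by
  have hlogb : log b = log a + m / a - m / b := by
    rw [logAddDiv, logAddDiv] at hab
    linarith
  simp [det_fin_three, fLogLin, logLinGap, logAddDiv, hlogb]
  field_simp
  ring

theorem threePoint_weights_pos_and_sum_eq_one (ha : 0 < a) (ham : a < m) (hmb : m < b)
    (hwa : wa = (b - m) * a / (2 * (b - a) * m)) (hwb : wb = (m - a) * b / (2 * (b - a) * m)) :
    0 < wa ∧ 0 < wb ∧ wa + 1 / 2 + wb = 1 := by
  have hm : 0 < m := ha.trans ham
  have hba : 0 < b - a := by linarith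
  refine ⟨?_, ?_, ?_⟩
  · rw [hwa]
    exact div_pos (mul_pos (by linarith) ha) (by positivity)
  · rw [hwb]
    exact div_pos (mul_pos (by linarith) (by linarith)) (by positivity)
  · rw [hwa, hwb]
    field_simp
    ring

theorem logLin_threePoint_mulVec_logLinElfvingVec (hθ₂ : θ₂ ≠ 0) (ha : 0 < a) (ham : a < m)
    (hmb : m < b) (hab : logAddDiv m a = logAddDiv m b)
    (hwa : wa = (b - m) * a / (2 * (b - a) * m)) (hwb : wb = (m - a) * b / (2 * (b - a) * m)) :
    (wa • logLinInfo θ₂ 0 a + (1 / 2 : ℝ) • logLinInfo θ₂ 0 m + wb • logLinInfo θ₂ 0 b) *ᵥ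
      logLinElfvingVec θ₂ a m = Pi.single 1 1 := by
  have hD := logLinGap_pos ha (ha.trans ham) ham.ne
  have hmid : logAddDiv m a - (logAddDiv m a + logAddDiv m m) / 2 = logLinGap a m / 2 := by
    rw [logLinGap]
    ring
  have hmin : logAddDiv m m - (logAddDiv m a + logAddDiv m m) / 2 = -(logLinGap a m / 2) := by
    rw [logLinGap]
    ring
  have hza : ∀ t, logAddDiv m t = logAddDiv m a →
      fLogLin θ₂ 0 t ⬝ᵥ logLinElfvingVec θ₂ a m = 2 / logLinGap a m := by
    intro t ht
    rw [fLogLin_zero_dotProduct_logLinElfvingVec hθ₂, ht, hmid]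
    field_simp
  have hzm : fLogLin θ₂ 0 m ⬝ᵥ logLinElfvingVec θ₂ a m = -(2 / logLinGap a m) := by
    rw [fLogLin_zero_dotProduct_logLinElfvingVec hθ₂, hmin]
    field_simp
  rw [logLinInfo, logLinInfo, logLinInfo, smul_vecMulVec_add_three_mulVec, hza a rfl, hzm,
    hza b hab.symm]
  calc _ = (2 / logLinGap a m) •
        (wa • fLogLin θ₂ 0 a - (1 / 2 : ℝ) • fLogLin θ₂ 0 m + wb • fLogLin θ₂ 0 b) := by
        module
    _ = Pi.single 1 1 := by
      rw [fLogLin_zero_threePoint_combination ha ham hmb hab hwa hwb, smul_smul,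
        div_mul_div_cancel₀ hD.ne', div_self two_ne_zero, one_smul]

theorem logLin_threePoint_det_ne_zero (hθ₂ : θ₂ ≠ 0) (ha : 0 < a) (ham : a < m) (hmb : m < b)
    (hab : logAddDiv m a = logAddDiv m b) (hwa : wa ≠ 0) (hwb : wb ≠ 0) :
    (wa • logLinInfo θ₂ 0 a + (1 / 2 : ℝ) • logLinInfo θ₂ 0 m + wb • logLinInfo θ₂ 0 b).det ≠
      0 := by
  have hm : 0 < m := ha.trans ham
  have hb : 0 < b := hm.trans hmb
  have hD := logLinGap_pos ha hm ham.ne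
  rw [logLinInfo, logLinInfo, logLinInfo, det_smul_vecMulVec_add_three,
    det_fLogLin_zero ha hm hb hab]
  have hba : b - a ≠ 0 := by linarith
  have : (1 / 2 : ℝ) ≠ 0 := by norm_num
  positivity

end LogLinear

theorem stmt14_general (θ₂ θ₃ : ℝ) (hθ₂ : 0 < θ₂) (hθ₃ : 0 < θ₃) (L U : ℝ)
    (hL : 0 < L) (hLU : L < U)
    (xl wL wU : ℝ)
    (hxl : xl = (L + θ₃) * (U + θ₃) / (U - L) * Real.log ((U + θ₃) / (L + θ₃)) - θ₃)
    (hwL : wL = (U - xl) * (L + θ₃) / (2 * (U - L) * (xl + θ₃)))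
    (hwU : wU = (xl - L) * (U + θ₃) / (2 * (U - L) * (xl + θ₃))) :
    0 < wL ∧ 0 < wU ∧ wL + 1 / 2 + wU = 1 ∧
    IsUnit (wL • logLinInfo θ₂ θ₃ L + (1 / 2 : ℝ) • logLinInfo θ₂ θ₃ xl +
        wU • logLinInfo θ₂ θ₃ U).det ∧
    ∀ ξ : Design (Set.Icc L U), IsUnit (infoMat (logLinInfo θ₂ θ₃) ξ).det →
      (wL • logLinInfo θ₂ θ₃ L + (1 / 2 : ℝ) • logLinInfo θ₂ θ₃ xl +
        wU • logLinInfo θ₂ θ₃ U)⁻¹ 1 1 ≤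
      (infoMat (logLinInfo θ₂ θ₃) ξ)⁻¹ 1 1 := by
  have ha : 0 < L + θ₃ := by linarith
  have hab : L + θ₃ < U + θ₃ := by linarith
  have hmid : xl + θ₃ = logLinMid (L + θ₃) (U + θ₃) := by rw [hxl, logLinMid]; ring
  have ham : L + θ₃ < xl + θ₃ := hmid ▸ lt_logLinMid ha hab
  have hmb : xl + θ₃ < U + θ₃ := hmid ▸ logLinMid_lt ha hab
  have hg : logAddDiv (xl + θ₃) (L + θ₃) = logAddDiv (xl + θ₃) (U + θ₃) :=
    hmid ▸ logAddDiv_logLinMid_left_eq_right ha hab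
  have hwL' : wL = (U + θ₃ - (xl + θ₃)) * (L + θ₃) / (2 * (U + θ₃ - (L + θ₃)) * (xl + θ₃)) := by
    rw [hwL]; ring
  have hwU' : wU = (xl + θ₃ - (L + θ₃)) * (U + θ₃) / (2 * (U + θ₃ - (L + θ₃)) * (xl + θ₃)) := by
    rw [hwU]; ring
  obtain ⟨hwLpos, hwUpos, hsum⟩ := threePoint_weights_pos_and_sum_eq_one ha ham hmb hwL' hwU'
  rw [logLinInfo_eq_logLinInfo_zero θ₂ θ₃ L, logLinInfo_eq_logLinInfo_zero θ₂ θ₃ xl,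
    logLinInfo_eq_logLinInfo_zero θ₂ θ₃ U]
  have hdet := isUnit_iff_ne_zero.2 <|
    logLin_threePoint_det_ne_zero hθ₂.ne' ha ham hmb hg hwLpos.ne' hwUpos.ne'
  refine ⟨hwLpos, hwUpos, hsum, hdet, fun ξ hξ => ?_⟩
  calc _ = Pi.single 1 1 ⬝ᵥ logLinElfvingVec θ₂ (L + θ₃) (xl + θ₃) := by
        rw [inv_apply_self_of_mulVec_eq_single hdet
          (logLin_threePoint_mulVec_logLinElfvingVec hθ₂.ne' ha ham hmb hg hwL' hwU'),
          single_dotProduct, one_mul]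
    _ ≤ Pi.single 1 1 ⬝ᵥ ((infoMat (logLinInfo θ₂ θ₃) ξ)⁻¹ *ᵥ Pi.single 1 1) :=
        dotProduct_le_dotProduct_infoMat_inv_mulVec (fLogLin θ₂ θ₃) ξ hξ fun x hx => by
          rw [single_dotProduct, one_mul, fLogLin_eq_fLogLin_zero]
          exact sq_fLogLin_zero_dotProduct_logLinElfvingVec_le hθ₂.ne' ha ham hg
            ⟨by linarith [hx.1], by linarith [hx.2]⟩
    _ = _ := by simp [mulVec_single]

/-- the design with weights
`((U−x_l*)(L+θ₃)/(2(U−L)(x_l*+θ₃)), 1/2, (x_l*−L)(U+θ₃)/(2(U−L)(x_l*+θ₃)))`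
at `L`, `x_l*`, `U` has positive weights summing to one and is e₂-optimal
(c-optimal for θ₂) for the log-linear model. -/
theorem stmt14 (θ₁ θ₂ θ₃ : ℝ) (hθ₂ : 0 < θ₂) (hθ₃ : 0 < θ₃) (L U : ℝ)
    (hL : 0 < L) (hLU : L < U)
    (xl wL wU : ℝ)
    (hxl : xl = (L + θ₃) * (U + θ₃) / (U - L) * Real.log ((U + θ₃) / (L + θ₃)) - θ₃)
    (hwL : wL = (U - xl) * (L + θ₃) / (2 * (U - L) * (xl + θ₃)))
    (hwU : wU = (xl - L) * (U + θ₃) / (2 * (U - L) * (xl + θ₃))) :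
    0 < wL ∧ 0 < wU ∧ wL + 1 / 2 + wU = 1 ∧
    IsUnit (wL • logLinInfo θ₂ θ₃ L + (1 / 2 : ℝ) • logLinInfo θ₂ θ₃ xl +
        wU • logLinInfo θ₂ θ₃ U).det ∧
    ∀ ξ : Design (Set.Icc L U), IsUnit (infoMat (logLinInfo θ₂ θ₃) ξ).det →
      (wL • logLinInfo θ₂ θ₃ L + (1 / 2 : ℝ) • logLinInfo θ₂ θ₃ xl +
        wU • logLinInfo θ₂ θ₃ U)⁻¹ 1 1 ≤
      (infoMat (logLinInfo θ₂ θ₃) ξ)⁻¹ 1 1 :=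
  stmt14_general θ₂ θ₃ hθ₂ hθ₃ L U hL hLU xl wL wU hxl hwL hwU
end

section
/- Consider the exponential regression model with S = 2 and parameters θ = (θ₁, θ₂, θ₃, θ₄) with θ₁ ≠ 0, θ₃ ≠ 0 and 0 < θ₂ < θ₄. The gradient family f(x,θ) = (e^{−θ₂x}, −θ₁ x e^{−θ₂x}, e^{−θ₄x}, −θ₃ x e^{−θ₄x}) is a Chebyshev system on [0, ∞): for any points 0 ≤ x₁ < x₂ < x₃ < x₄, the 4×4 matrix with (i,j) entry f_j(x_i, θ) has nonzero determinant. -/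
/-!
A vector `v` in the kernel of the matrix gives, after dividing row `i` by `exp (-θ₂ xᵢ)`, a function
`g s = a + b s + (c + d s) exp (μ s)` with `μ = θ₂ - θ₄ ≠ 0` and four distinct zeros, where
`b = -θ₁ v₁` and `d = -θ₃ v₃`. Differentiating twice leaves `(α + β s) exp (μ s)` with
`β = μ² d`, and by Rolle's theorem it still has two zeros; so the affine factor vanishes, forcing
`c = d = 0`, after which `a + b s` has four zeros and `a = b = 0` as well. Hence `v = 0`.
-/

open Real

theorem exists_strictMono_zeros_of_hasDerivAt {n : ℕ} {f f' : ℝ → ℝ}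
    (hf : ∀ x, HasDerivAt f (f' x) x) {t : Fin (n + 2) → ℝ} (ht : StrictMono t)
    (hz : ∀ i, f (t i) = 0) : ∃ s : Fin (n + 1) → ℝ, StrictMono s ∧ ∀ i, f' (s i) = 0 := by
  have hRolle (i : Fin (n + 1)) : ∃ c ∈ Set.Ioo (t i.castSucc) (t i.succ), f' c = 0 :=
    exists_hasDerivAt_eq_zero (ht i.castSucc_lt_succ)
      (fun x _ => (hf x).continuousAt.continuousWithinAt) (by rw [hz, hz]) fun x _ => hf x
  choose s hs hs0 using hRolle
  refine ⟨s, Fin.strictMono_iff_lt_succ.mpr fun i => ?_, hs0⟩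
  calc s i.castSucc < t i.castSucc.succ := (hs _).2
    _ = t i.succ.castSucc := rfl
    _ < s i.succ := (hs _).1

theorem eq_zero_of_affine_eq_zero {a b x y : ℝ} (hxy : x ≠ y)
    (hx : a + b * x = 0) (hy : a + b * y = 0) : a = 0 ∧ b = 0 := by
  have hb : b = 0 := by
    have : b * (x - y) = 0 := by linear_combination hx - hy
    exact (mul_eq_zero.mp this).resolve_right (sub_ne_zero.mpr hxy)
  exact ⟨by simpa [hb] using hx, hb⟩

theorem hasDerivAt_affine_mul_exp (p q μ s : ℝ) :
    HasDerivAt (fun s => (p + q * s) * exp (μ * s))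
      ((q + μ * p + μ * q * s) * exp (μ * s)) s := by
  have hexp := ((hasDerivAt_id s).const_mul μ).exp
  have haff := ((hasDerivAt_id s).const_mul q).const_add p
  simp only [id, mul_one] at hexp haff
  exact (haff.mul hexp).congr_deriv (by ring)

theorem affine_add_affine_mul_exp_eq_zero {μ a b c d : ℝ} (hμ : μ ≠ 0) {t : Fin 4 → ℝ}
    (ht : StrictMono t) (hz : ∀ i, a + b * t i + (c + d * t i) * exp (μ * t i) = 0) :
    a = 0 ∧ b = 0 ∧ c = 0 ∧ d = 0 := by
  have hg (s : ℝ) : HasDerivAt (fun s => a + b * s + (c + d * s) * exp (μ * s))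
      (b + (d + μ * c + μ * d * s) * exp (μ * s)) s := by
    have hlin := ((hasDerivAt_id s).const_mul b).const_add a
    simp only [id, mul_one] at hlin
    exact hlin.add (hasDerivAt_affine_mul_exp c d μ s)
  have hg' (s : ℝ) : HasDerivAt (fun s => b + (d + μ * c + μ * d * s) * exp (μ * s))
      ((μ * d + μ * (d + μ * c) + μ * (μ * d) * s) * exp (μ * s)) s :=
    (hasDerivAt_affine_mul_exp _ _ μ s).const_add b
  obtain ⟨s, hs, hs0⟩ := exists_strictMono_zeros_of_hasDerivAt hg ht hz
  obtain ⟨r, hr, hr0⟩ := exists_strictMono_zeros_of_hasDerivAt hg' hs hs0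
  have hr0' (i : Fin 2) : μ * d + μ * (d + μ * c) + μ * (μ * d) * r i = 0 :=
    (mul_eq_zero.mp (hr0 i)).resolve_right (exp_ne_zero _)
  obtain ⟨hαβ, hβ⟩ := eq_zero_of_affine_eq_zero (hr.injective.ne (by decide)) (hr0' 0) (hr0' 1)
  have hd : d = 0 := by simpa [hμ] using hβ
  have hc : c = 0 := by simpa [hμ, hd] using hαβ
  have hlin (i : Fin 4) : a + b * t i = 0 := by simpa [hc, hd] using hz i
  obtain ⟨ha, hb⟩ := eq_zero_of_affine_eq_zero (ht.injective.ne (by decide)) (hlin 0) (hlin 1)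
  exact ⟨ha, hb, hc, hd⟩

theorem stmt15_general (θ₁ θ₂ θ₃ θ₄ : ℝ) (hθ₁ : θ₁ ≠ 0) (hθ₃ : θ₃ ≠ 0)
    (hθ₂₄ : θ₂ < θ₄)
    (x : Fin 4 → ℝ) (hx : StrictMono x) :
    (Matrix.of fun i j : Fin 4 =>
      ![fun t => Real.exp (-θ₂ * t),
        fun t => -θ₁ * t * Real.exp (-θ₂ * t),
        fun t => Real.exp (-θ₄ * t),
        fun t => -θ₃ * t * Real.exp (-θ₄ * t)] j (x i)).det ≠ 0 := by
  intro hdet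
  obtain ⟨v, hv, hmv⟩ := Matrix.exists_mulVec_eq_zero_iff.mpr hdet
  have hrow (i : Fin 4) : v 0 + -θ₁ * v 1 * x i +
      (v 2 + -θ₃ * v 3 * x i) * exp ((θ₂ - θ₄) * x i) = 0 := by
    have hvi := congrFun hmv i
    simp only [Matrix.mulVec, dotProduct, Fin.sum_univ_four, Matrix.of_apply,
      Matrix.cons_val, Pi.zero_apply] at hvi
    have hexp : exp ((θ₂ - θ₄) * x i) * exp (-θ₂ * x i) = exp (-θ₄ * x i) := by
      rw [← exp_add]; ring_nf
    refine (mul_eq_zero.mp ?_).resolve_right (exp_ne_zero (-θ₂ * x i))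
    linear_combination hvi + (v 2 + -θ₃ * v 3 * x i) * hexp
  obtain ⟨h0, h1, h2, h3⟩ :=
    affine_add_affine_mul_exp_eq_zero (sub_ne_zero.mpr hθ₂₄.ne) hx hrow
  apply hv
  ext j
  fin_cases j
  · exact h0
  · simpa [hθ₁] using h1
  · exact h2
  · simpa [hθ₃] using h3

/-- the gradient family of the two-compartment exponential regression model
is a Chebyshev system on `[0, ∞)`. -/
theorem stmt15 (θ₁ θ₂ θ₃ θ₄ : ℝ) (hθ₁ : θ₁ ≠ 0) (hθ₃ : θ₃ ≠ 0)
    (hθ₂ : 0 < θ₂) (hθ₂₄ : θ₂ < θ₄)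
    (x : Fin 4 → ℝ) (hx0 : 0 ≤ x 0) (hx : StrictMono x) :
    (Matrix.of fun i j : Fin 4 =>
      ![fun t => Real.exp (-θ₂ * t),
        fun t => -θ₁ * t * Real.exp (-θ₂ * t),
        fun t => Real.exp (-θ₄ * t),
        fun t => -θ₃ * t * Real.exp (-θ₄ * t)] j (x i)).det ≠ 0 :=
  stmt15_general θ₁ θ₂ θ₃ θ₄ hθ₁ hθ₃ hθ₂₄ x hx
end

section
/- Let d ≥ 1 and let p < 0 satisfy |p| ≥ −log d / log 0.95 (i.e., |p| ≥ log d / log(1/0.95)). Let S be a nonempty set of d×d real symmetric positive definite matrices, let M_p ∈ S maximize Φ_p(M) = ((1/d) trace(M^p))^{1/p} over S, and let M_E ∈ S maximize the smallest eigenvalue λ_min(M) over S. Then λ_min(M_p) ≥ 0.95 · λ_min(M_E); that is, the Φ_p-optimal matrix has E-efficiency at least 95%. -/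
set_option maxHeartbeats 1000000

open Classical in
/-- The eigenvalues of a real symmetric matrix (junk value `0` if not symmetric). -/
noncomputable def eigs {d : ℕ} (M : Matrix (Fin d) (Fin d) ℝ) : Fin d → ℝ :=
  if h : M.IsHermitian then h.eigenvalues else 0

/-- The `Φ_p` criterion value `((1/d) trace(M^p))^(1/p) = ((1/d) Σᵢ λᵢ^p)^(1/p)`. -/
noncomputable def PhiP {d : ℕ} (p : ℝ) (M : Matrix (Fin d) (Fin d) ℝ) : ℝ :=
  ((1 / (d : ℝ)) * ∑ i, eigs M i ^ p) ^ (1 / p)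

/-- The smallest eigenvalue (the E-criterion value). -/
noncomputable def lamMin {d : ℕ} (M : Matrix (Fin d) (Fin d) ℝ) : ℝ :=
  ⨅ i, eigs M i

lemma eigs_pos {d : ℕ} {M : Matrix (Fin d) (Fin d) ℝ} (hM : M.PosDef) (i : Fin d) :
    0 < eigs M i := by
  rw [eigs, dif_pos hM.isHermitian]
  exact hM.eigenvalues_pos i

lemma lamMin_exists {d : ℕ} (hd : 1 ≤ d) (M : Matrix (Fin d) (Fin d) ℝ) :
    ∃ i, lamMin M = eigs M i ∧ ∀ j, eigs M i ≤ eigs M j := by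
  haveI : Nonempty (Fin d) := ⟨⟨0, hd⟩⟩
  obtain ⟨i, -, hi⟩ := Finset.exists_min_image Finset.univ (eigs M) ⟨⟨0, hd⟩, Finset.mem_univ _⟩
  have hi' : ∀ j, eigs M i ≤ eigs M j := fun j => hi j (Finset.mem_univ j)
  exact ⟨i, le_antisymm (ciInf_le (Set.Finite.bddBelow (Set.finite_range _)) i)
    (le_ciInf hi'), hi'⟩

lemma lamMin_pos {d : ℕ} (hd : 1 ≤ d) {M : Matrix (Fin d) (Fin d) ℝ} (hM : M.PosDef) :
    0 < lamMin M := by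
  obtain ⟨i, hi, -⟩ := lamMin_exists hd M
  rw [hi]; exact eigs_pos hM i

lemma lamMin_le_eigs {d : ℕ} (hd : 1 ≤ d) (M : Matrix (Fin d) (Fin d) ℝ) (i : Fin d) :
    lamMin M ≤ eigs M i := by
  haveI : Nonempty (Fin d) := ⟨⟨0, hd⟩⟩
  exact ciInf_le (Set.Finite.bddBelow (Set.finite_range _)) i

lemma sum_pos' {d : ℕ} (hd : 1 ≤ d) {M : Matrix (Fin d) (Fin d) ℝ} (hM : M.PosDef)
    (p : ℝ) : 0 < ∑ i, eigs M i ^ p := by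
  apply Finset.sum_pos (fun i _ => Real.rpow_pos_of_pos (eigs_pos hM i) p)
  exact ⟨⟨0, hd⟩, Finset.mem_univ _⟩

/-- `λ_min(M) ≤ Φ_p(M)` for `p < 0`. -/
lemma lamMin_le_PhiP {d : ℕ} (hd : 1 ≤ d) {p : ℝ} (hp : p < 0)
    {M : Matrix (Fin d) (Fin d) ℝ} (hM : M.PosDef) :
    lamMin M ≤ PhiP p M := by
  set L := lamMin M with hL
  have hLpos : 0 < L := lamMin_pos hd hM
  have hdpos : (0:ℝ) < d := by exact_mod_cast hd.trans_lt' zero_lt_one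
  have hsum : ∑ i, eigs M i ^ p ≤ (d : ℝ) * L ^ p := by
    calc ∑ i, eigs M i ^ p ≤ ∑ _i : Fin d, L ^ p := by
          apply Finset.sum_le_sum
          intro i _
          exact Real.rpow_le_rpow_of_nonpos hLpos (lamMin_le_eigs hd M i) hp.le
      _ = (d : ℝ) * L ^ p := by
          rw [Finset.sum_const, Finset.card_univ, Fintype.card_fin, nsmul_eq_mul]
  have h1 : (1 / (d:ℝ)) * ∑ i, eigs M i ^ p ≤ L ^ p := by
    rw [one_div, inv_mul_le_iff₀ hdpos]
    linarith [hsum]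
  have h2 : 0 < (1 / (d:ℝ)) * ∑ i, eigs M i ^ p :=
    mul_pos (by positivity) (sum_pos' hd hM p)
  have hLp : (L ^ p) ^ (1/p) = L := by
    rw [← Real.rpow_mul hLpos.le, mul_one_div_cancel hp.ne, Real.rpow_one]
  calc L = (L ^ p) ^ (1/p) := hLp.symm
    _ ≤ ((1 / (d:ℝ)) * ∑ i, eigs M i ^ p) ^ (1/p) :=
        Real.rpow_le_rpow_of_nonpos h2 h1
          (div_nonpos_of_nonneg_of_nonpos zero_le_one hp.le)
    _ = PhiP p M := rfl

/-- `d^(1/p) · Φ_p(M) ≤ λ_min(M)` for `p < 0`. -/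
lemma PhiP_mul_le_lamMin {d : ℕ} (hd : 1 ≤ d) {p : ℝ} (hp : p < 0)
    {M : Matrix (Fin d) (Fin d) ℝ} (hM : M.PosDef) :
    (d : ℝ) ^ (1/p) * PhiP p M ≤ lamMin M := by
  set L := lamMin M with hL
  have hLpos : 0 < L := lamMin_pos hd hM
  have hdpos : (0:ℝ) < d := by exact_mod_cast hd.trans_lt' zero_lt_one
  obtain ⟨i₀, hi₀, -⟩ := lamMin_exists hd M
  have hsum : L ^ p ≤ ∑ i, eigs M i ^ p := by
    rw [hL, hi₀]
    exact Finset.single_le_sum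
      (fun i _ => (Real.rpow_pos_of_pos (eigs_pos hM i) p).le) (Finset.mem_univ i₀)
  have h1 : (1 / (d:ℝ)) * L ^ p ≤ (1 / (d:ℝ)) * ∑ i, eigs M i ^ p :=
    mul_le_mul_of_nonneg_left hsum (by positivity)
  have h2 : 0 < (1 / (d:ℝ)) * L ^ p := mul_pos (by positivity) (Real.rpow_pos_of_pos hLpos p)
  have hPhi : PhiP p M ≤ ((1 / (d:ℝ)) * L ^ p) ^ (1/p) :=
    Real.rpow_le_rpow_of_nonpos h2 h1
      (div_nonpos_of_nonneg_of_nonpos zero_le_one hp.le)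
  have hsplit : ((1 / (d:ℝ)) * L ^ p) ^ (1/p) = (1/(d:ℝ)) ^ (1/p) * L := by
    rw [Real.mul_rpow (by positivity) (Real.rpow_pos_of_pos hLpos p).le,
      ← Real.rpow_mul hLpos.le, mul_one_div_cancel hp.ne, Real.rpow_one]
  have hc : (d : ℝ) ^ (1/p) * (1/(d:ℝ)) ^ (1/p) = 1 := by
    rw [← Real.mul_rpow hdpos.le (by positivity), mul_one_div_cancel hdpos.ne',
      Real.one_rpow]
  calc (d : ℝ) ^ (1/p) * PhiP p M
      ≤ (d : ℝ) ^ (1/p) * ((1/(d:ℝ)) ^ (1/p) * L) := by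
        apply mul_le_mul_of_nonneg_left _ (Real.rpow_pos_of_pos hdpos _).le
        rw [← hsplit]; exact hPhi
    _ = ((d : ℝ) ^ (1/p) * (1/(d:ℝ)) ^ (1/p)) * L := by ring
    _ = L := by rw [hc, one_mul]

/-- if `|p| ≥ -log d / log 0.95`, a `Φ_p`-optimal matrix has E-efficiency
at least 95%. -/
theorem stmt18 {d : ℕ} (hd : 1 ≤ d) (p : ℝ) (hp : p < 0)
    (hplarge : -Real.log d / Real.log 0.95 ≤ |p|)
    (S : Set (Matrix (Fin d) (Fin d) ℝ)) (hS : S.Nonempty)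
    (hSpd : ∀ M ∈ S, M.PosDef)
    (Mp : Matrix (Fin d) (Fin d) ℝ) (hMpS : Mp ∈ S)
    (hMpOpt : ∀ M ∈ S, PhiP p M ≤ PhiP p Mp)
    (ME : Matrix (Fin d) (Fin d) ℝ) (hMES : ME ∈ S)
    (hMEOpt : ∀ M ∈ S, lamMin M ≤ lamMin ME) :
    0.95 * lamMin ME ≤ lamMin Mp := by
  have hdpos : (0:ℝ) < d := by exact_mod_cast hd.trans_lt' zero_lt_one
  have hpdME : ME.PosDef := hSpd _ hMES
  have hpdMp : Mp.PosDef := hSpd _ hMpS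
  -- c = d^(1/p) ≥ 0.95
  set c : ℝ := (d : ℝ) ^ (1/p) with hc
  have hcpos : 0 < c := Real.rpow_pos_of_pos hdpos _
  have hlog95 : Real.log 0.95 < 0 := Real.log_neg (by norm_num) (by norm_num)
  have habs : |p| = -p := abs_of_neg hp
  have hkey : (d : ℝ) ≤ (0.95 : ℝ) ^ p := by
    have h1 : -Real.log d / Real.log 0.95 ≤ -p := habs ▸ hplarge
    have h2 : Real.log d ≤ Real.log 0.95 * p := by
      rw [div_le_iff_of_neg hlog95] at h1
      nlinarith
    calc (d : ℝ) = Real.exp (Real.log d) := (Real.exp_log hdpos).symm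
      _ ≤ Real.exp (Real.log 0.95 * p) := Real.exp_le_exp.mpr h2
      _ = (0.95 : ℝ) ^ p := (Real.rpow_def_of_pos (by norm_num) p).symm
  have hc95 : (0.95 : ℝ) ≤ c := by
    have h3 : ((0.95:ℝ) ^ p) ^ (1/p) ≤ (d : ℝ) ^ (1/p) := by
      have hbase : (0:ℝ) < d := hdpos
      exact Real.rpow_le_rpow_of_nonpos hbase hkey
        (div_nonpos_of_nonneg_of_nonpos zero_le_one hp.le)
    have h4 : ((0.95:ℝ) ^ p) ^ (1/p) = 0.95 := by
      rw [← Real.rpow_mul (by norm_num : (0:ℝ) ≤ 0.95), mul_one_div_cancel hp.ne,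
        Real.rpow_one]
    rw [← h4]; exact h3
  have hMEpos : 0 < lamMin ME := lamMin_pos hd hpdME
  have hPhiMEpos : 0 ≤ PhiP p ME := le_trans hMEpos.le (lamMin_le_PhiP hd hp hpdME)
  calc 0.95 * lamMin ME ≤ c * lamMin ME := mul_le_mul_of_nonneg_right hc95 hMEpos.le
    _ ≤ c * PhiP p ME := mul_le_mul_of_nonneg_left (lamMin_le_PhiP hd hp hpdME) hcpos.le
    _ ≤ c * PhiP p Mp := mul_le_mul_of_nonneg_left (hMpOpt _ hMES) hcpos.le
    _ ≤ lamMin Mp := PhiP_mul_le_lamMin hd hp hpdMp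
end

section
/- Fix real numbers θ₂ ≠ 0 and θ₃ ≠ 0, and consider the LINEXP model gradient f(x,θ) = (1, e^{θ₃x}, θ₂ x e^{θ₃x}, x). Then both reduced families f₋₃ = {1, e^{θ₃x}, x} and f₋₄ = {1, e^{θ₃x}, θ₂ x e^{θ₃x}} are Chebyshev systems on ℝ: for any points x₁ < x₂ < x₃, the 3×3 matrices with rows (1, e^{θ₃x_i}, x_i) (respectively (1, e^{θ₃x_i}, θ₂ x_i e^{θ₃x_i})) for i = 1, 2, 3 have nonzero determinant. -/
/-!
If `α + β t + γ e^{a t}` (with `a ≠ 0`) vanishes at three points, Rolle's theorem gives two distinct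
zeros of its derivative `β + γ a e^{a t}`, which is injective unless `γ = 0`; an affine function with
three zeros vanishes identically. The second family becomes the first one with `θ₃ ↦ -θ₃` after
division by `e^{θ₃ t}`.
-/

open Function

theorem Matrix.det_of_eval_ne_zero {K ι α : Type*} [Field K] [Fintype ι] [DecidableEq ι]
    (g : ι → α → K) (x : ι → α)
    (h : ∀ v : ι → K, (∀ i, ∑ j, g j (x i) * v j = 0) → v = 0) :
    (Matrix.of fun i j => g j (x i)).det ≠ 0 := by
  intro hdet
  obtain ⟨v, hv, hmv⟩ := Matrix.exists_mulVec_eq_zero_iff.mpr hdet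
  exact hv (h v fun i => congrFun hmv i)

theorem not_eq_eq_of_deriv_injective {f f' : ℝ → ℝ} (hf : ∀ t, HasDerivAt f (f' t) t)
    (hf' : Injective f') {a b c : ℝ} (hab : a < b) (hbc : b < c) (h₁ : f a = f b)
    (h₂ : f b = f c) : False := by
  have hcont : Continuous f := continuous_iff_continuousAt.mpr fun t => (hf t).continuousAt
  obtain ⟨c₁, hc₁, hc₁'⟩ := exists_hasDerivAt_eq_zero hab hcont.continuousOn h₁ fun t _ => hf t
  obtain ⟨c₂, hc₂, hc₂'⟩ := exists_hasDerivAt_eq_zero hbc hcont.continuousOn h₂ fun t _ => hf t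
  exact (hc₁.2.trans hc₂.1).ne (hf' (hc₁'.trans hc₂'.symm))

theorem hasDerivAt_affine_add_exp (a α β γ t : ℝ) :
    HasDerivAt (fun t => α + β * t + γ * Real.exp (a * t))
      (β + γ * (Real.exp (a * t) * a)) t := by
  have hlin : HasDerivAt (fun t : ℝ => a * t) a t := by
    simpa using (hasDerivAt_id t).const_mul a
  have hexp := ((Real.hasDerivAt_exp (a * t)).comp t hlin).const_mul γ
  have hsum := (((hasDerivAt_id t).const_mul β).const_add α).add hexp
  simp only [id, mul_one] at hsum
  exact hsum

theorem affine_add_exp_eq_zero_of_three_zeros {a α β γ : ℝ} (ha : a ≠ 0) {x : Fin 3 → ℝ}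
    (hx : StrictMono x) (hz : ∀ i, α + β * x i + γ * Real.exp (a * x i) = 0) :
    α = 0 ∧ β = 0 ∧ γ = 0 := by
  have h01 : x 0 < x 1 := hx (by decide)
  have h12 : x 1 < x 2 := hx (by decide)
  obtain rfl : γ = 0 := by
    by_contra hγ
    have hinj : Injective fun t => β + γ * (Real.exp (a * t) * a) := by
      intro s t hst
      have hexp : Real.exp (a * s) = Real.exp (a * t) :=
        mul_right_cancel₀ ha (mul_left_cancel₀ hγ (add_left_cancel hst))
      exact mul_left_cancel₀ ha (Real.exp_injective hexp)
    exact not_eq_eq_of_deriv_injective (hasDerivAt_affine_add_exp a α β γ) hinj h01 h12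
      ((hz 0).trans (hz 1).symm) ((hz 1).trans (hz 2).symm)
  have hβ : β = 0 := by
    have hd : β * (x 1 - x 0) = 0 := by linear_combination hz 1 - hz 0
    exact (mul_eq_zero.mp hd).resolve_right (sub_ne_zero.mpr h01.ne')
  subst hβ
  exact ⟨by simpa using hz 0, rfl, rfl⟩

/-- the reduced gradient families `f₋₃ = {1, e^{θ₃x}, x}` and
`f₋₄ = {1, e^{θ₃x}, θ₂ x e^{θ₃x}}` of the LINEXP model are Chebyshev systems on `ℝ`. -/
theorem stmt19 (θ₂ θ₃ : ℝ) (hθ₂ : θ₂ ≠ 0) (hθ₃ : θ₃ ≠ 0)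
    (x : Fin 3 → ℝ) (hx : StrictMono x) :
    (Matrix.of fun i j : Fin 3 =>
      ![fun t => (1 : ℝ),
        fun t => Real.exp (θ₃ * t),
        fun t => t] j (x i)).det ≠ 0 ∧
    (Matrix.of fun i j : Fin 3 =>
      ![fun t => (1 : ℝ),
        fun t => Real.exp (θ₃ * t),
        fun t => θ₂ * t * Real.exp (θ₃ * t)] j (x i)).det ≠ 0 := by
  constructor
  · refine Matrix.det_of_eval_ne_zero _ x fun v hv => ?_
    obtain ⟨h₀, h₂, h₁⟩ := affine_add_exp_eq_zero_of_three_zeros hθ₃ hx (α := v 0) (β := v 2)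
      (γ := v 1) fun i => by
        have := hv i
        simp only [Fin.sum_univ_three, Matrix.cons_val] at this
        linear_combination this
    ext i; fin_cases i <;> assumption
  · refine Matrix.det_of_eval_ne_zero _ x fun v hv => ?_
    obtain ⟨h₁, h₂, h₀⟩ := affine_add_exp_eq_zero_of_three_zeros (neg_ne_zero.mpr hθ₃) hx
      (α := v 1) (β := θ₂ * v 2) (γ := v 0) fun i => by
        have := hv i
        simp only [Fin.sum_univ_three, Matrix.cons_val] at this
        have hinv : Real.exp (-θ₃ * x i) * Real.exp (θ₃ * x i) = 1 := by
          rw [← Real.exp_add]; simp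
        linear_combination Real.exp (-θ₃ * x i) * this - (v 1 + θ₂ * x i * v 2) * hinv
    have h₂' : v 2 = 0 := (mul_eq_zero.mp h₂).resolve_left hθ₂
    ext i; fin_cases i <;> assumption
end
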